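/- arXiv:2207.09171 — 2 statements merged into one kernel-verified Lean document; each statement's English description precedes it below -/
import Mathlib

section
/- The closed-loop matrix A - BR⁻¹BᵀΠ arising from a symmetric positive definite solution Π of the ARE AᵀΠ + ΠA - ΠBR⁻¹BᵀΠ + Q = 0 with Q positive definite is Hurwitz, i.e. every eigenvalue of A - BR⁻¹BᵀΠ has strictly negative real part. -/
open Matrix

lemma posdef_map_re_pos {n : ℕ} {S : Matrix (Fin n) (Fin n) ℝ} (hS : S.PosDef)
    {v : Fin n → ℂ} (hv : v ≠ 0) :
    0 < (star v ⬝ᵥ (S.map (fun a : ℝ => (a : ℂ))) *ᵥ v).re := by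
  set a : Fin n → ℝ := fun i => (v i).re with ha
  set b : Fin n → ℝ := fun i => (v i).im with hb
  have key : (star v ⬝ᵥ (S.map (fun a : ℝ => (a : ℂ))) *ᵥ v).re
      = a ⬝ᵥ S *ᵥ a + b ⬝ᵥ S *ᵥ b := by
    simp only [dotProduct, mulVec, Pi.star_apply, map_apply, Complex.re_sum]
    rw [← Finset.sum_add_distrib]
    refine Finset.sum_congr rfl fun i _ => ?_
    simp only [Complex.mul_re, Complex.re_sum, Complex.im_sum, Complex.mul_im,
      Complex.ofReal_re, Complex.ofReal_im, RCLike.star_def, Complex.conj_re,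
      Complex.conj_im, Finset.mul_sum]
    rw [← Finset.sum_add_distrib]
    refine Finset.sum_congr rfl fun j _ => ?_
    ring
  rw [key]
  have hab : a ≠ 0 ∨ b ≠ 0 := by
    by_contra h
    push_neg at h
    obtain ⟨h1, h2⟩ := h
    exact hv (funext fun i => Complex.ext (congrFun h1 i) (congrFun h2 i))
  have hsa := hS.posSemidef.dotProduct_mulVec_nonneg a
  have hsb := hS.posSemidef.dotProduct_mulVec_nonneg b
  rw [star_trivial] at hsa hsb
  rcases hab with h | h
  · have := hS.dotProduct_mulVec_pos h; rw [star_trivial] at this; linarith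
  · have := hS.dotProduct_mulVec_pos h; rw [star_trivial] at this; linarith


/-- The closed-loop matrix A - BR⁻¹BᵀΠ arising from a symmetric positive
definite ARE solution Π (with Q positive definite) is Hurwitz: every complex
eigenvalue has strictly negative real part. -/
theorem are_closed_loop_hurwitz {n : ℕ}
    (A B Q R Pm : Matrix (Fin n) (Fin n) ℝ)
    (hQ : Q.PosDef) (hR : R.PosDef) (hPm : Pm.PosDef)
    (hare : Aᵀ * Pm + Pm * A - Pm * B * R⁻¹ * Bᵀ * Pm + Q = 0) :
    ∀ μ : ℂ, μ ∈ spectrum ℂ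
        ((A - B * R⁻¹ * Bᵀ * Pm).map (fun a : ℝ => (a : ℂ))) → μ.re < 0 := by
  intro μ hμ
  set M : Matrix (Fin n) (Fin n) ℝ := A - B * R⁻¹ * Bᵀ * Pm with hM
  set K : Matrix (Fin n) (Fin n) ℝ := Pm * B * R⁻¹ * Bᵀ * Pm with hK
  have hPsym : Pmᵀ = Pm := by
    have := hPm.isHermitian.eq
    rw [← conjTranspose_eq_transpose_of_trivial]; exact this
  have hRinv : (R⁻¹)ᵀ = R⁻¹ := by
    rw [Matrix.transpose_nonsing_inv]
    congr 1
    have := hR.isHermitian.eq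
    rw [← conjTranspose_eq_transpose_of_trivial]; exact this
  -- real Lyapunov identity
  have hMT : Mᵀ = Aᵀ - Pm * B * R⁻¹ * Bᵀ := by
    rw [hM]
    simp [Matrix.transpose_mul, hPsym, hRinv, Matrix.mul_assoc]
  have lyap : Mᵀ * Pm + Pm * M = -(Q + K) := by
    have : Mᵀ * Pm + Pm * M
        = (Aᵀ * Pm + Pm * A - Pm * B * R⁻¹ * Bᵀ * Pm + Q) - (Q + K) := by
      rw [hMT, hM, hK]; noncomm_ring
    rw [this, hare, zero_sub]
  -- K is positive semidefinite
  have hKpsd : K.PosSemidef := by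
    have h := (hR.inv).posSemidef.conjTranspose_mul_mul_same (Bᵀ * Pm)
    have he : (Bᵀ * Pm)ᴴ * R⁻¹ * (Bᵀ * Pm) = K := by
      rw [hK]
      have : (Bᵀ * Pm)ᴴ = Pm * B := by
        rw [conjTranspose_mul]
        have hsymm : ∀ i k, Pm i k = Pm k i := fun i k => by conv_lhs => rw [← hPsym, transpose_apply]
        ext i j
        simp [conjTranspose_apply, mul_apply, mul_comm, hsymm i]
      rw [this]; noncomm_ring
    rwa [he] at h
  have hQK : (Q + K).PosDef := hQ.add_posSemidef hKpsd
  -- complexify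
  set f : ℝ →+* ℂ := Complex.ofRealHom with hf
  have hfc : (fun a : ℝ => (a : ℂ)) = ⇑f := rfl
  set φ : Matrix (Fin n) (Fin n) ℝ →+* Matrix (Fin n) (Fin n) ℂ := f.mapMatrix with hφ
  have lyap' : (M.map f)ᵀ * Pm.map f + Pm.map f * M.map f = -((Q + K).map f) := by
    have h0 := congrArg φ lyap
    have e1 : φ (Mᵀ * Pm + Pm * M) = (M.map f)ᵀ * Pm.map f + Pm.map f * M.map f := by
      rw [_root_.map_add, _root_.map_mul, _root_.map_mul, hφ]
      simp [RingHom.mapMatrix_apply, Matrix.transpose_map]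
    have e2 : φ (-(Q + K)) = -((Q + K).map f) := by
      rw [_root_.map_neg, hφ, RingHom.mapMatrix_apply]
    rwa [e1, e2] at h0
  -- eigenvector
  have hev : Module.End.HasEigenvalue (Matrix.toLin' (M.map f)) μ := by
    rw [Module.End.hasEigenvalue_iff_mem_spectrum]
    rw [hfc] at hμ
    rwa [← AlgEquiv.spectrum_eq (Matrix.toLinAlgEquiv' : Matrix (Fin n) (Fin n) ℂ ≃ₐ[ℂ] _) (M.map f)] at hμ
  obtain ⟨v, hv⟩ := hev.exists_hasEigenvector
  have hveq : (M.map f) *ᵥ v = μ • v := by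
    have := hv.apply_eq_smul
    rwa [Matrix.toLin'_apply] at this
  have hv0 : v ≠ 0 := hv.right
  set P' : Matrix (Fin n) (Fin n) ℂ := Pm.map ⇑f with hP'
  set c : ℂ := star v ⬝ᵥ P' *ᵥ v with hc
  have hMstar : (M.map ⇑f)ᴴ = (M.map ⇑f)ᵀ := by
    ext i j
    simp [conjTranspose_apply, Complex.conj_ofReal, hf]
  have hterm1 : star v ⬝ᵥ ((M.map ⇑f)ᵀ * P') *ᵥ v = (starRingEnd ℂ) μ * c := by
    rw [← Matrix.mulVec_mulVec, Matrix.dotProduct_mulVec, Matrix.vecMul_transpose]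
    have hsw : (M.map ⇑f) *ᵥ star v = star ((M.map ⇑f) *ᵥ v) := by
      rw [Matrix.star_mulVec, hMstar, Matrix.vecMul_transpose]
    rw [hsw, hveq, star_smul, smul_dotProduct, hc]
    simp [smul_eq_mul]
  have hterm2 : star v ⬝ᵥ (P' * (M.map ⇑f)) *ᵥ v = μ * c := by
    rw [← Matrix.mulVec_mulVec, hveq, Matrix.mulVec_smul, dotProduct_smul, hc]
    simp [smul_eq_mul]
  have hsum : -(star v ⬝ᵥ ((Q + K).map ⇑f) *ᵥ v) = (starRingEnd ℂ) μ * c + μ * c := by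
    rw [← hterm1, ← hterm2, ← dotProduct_add, ← add_mulVec, lyap', neg_mulVec, dotProduct_neg]
  have hre : -((star v ⬝ᵥ ((Q + K).map ⇑f) *ᵥ v).re) = 2 * μ.re * c.re := by
    have h1 : (starRingEnd ℂ) μ * c + μ * c = ((2 * μ.re : ℝ) : ℂ) * c := by
      rw [← add_mul, add_comm, Complex.add_conj]
    have := congrArg Complex.re hsum
    rw [h1] at this
    simp only [Complex.neg_re, Complex.mul_re, Complex.ofReal_re, Complex.ofReal_im,
      zero_mul, sub_zero] at this ⊢
    linarith
  have hpos1 : 0 < c.re := by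
    have := posdef_map_re_pos hPm hv0
    rwa [hfc] at this
  have hpos2 : 0 < (star v ⬝ᵥ ((Q + K).map ⇑f) *ᵥ v).re := by
    have := posdef_map_re_pos hQK hv0
    rwa [hfc] at this
  nlinarith [hpos1, hpos2, hre]
end

section
/- If P(x,y) ≥ c > 0 for all x, y in a convex set Ω ⊆ ℝ^d, then along the uncontrolled mean-field microscopic dynamics ẋ_i = (1/N)Σ_j P(x_i,x_j)(x_j - x_i) with symmetric P, the variance functional W(t) = (1/N)Σ_i ‖x_i - x̄‖² satisfies d/dt W(t) ≤ -2c·W(t), hence W(t) ≤ W(0)e^{-2ct} and the system converges exponentially to consensus. -/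
open scoped BigOperators

open RealInnerProductSpace Finset in
private lemma key_sum_ineq {d N : ℕ} (c : ℝ)
    (y : Fin N → EuclideanSpace ℝ (Fin d)) (hy : ∑ i, y i = 0)
    (Q : Fin N → Fin N → ℝ) (hQs : ∀ i j, Q i j = Q j i) (hQc : ∀ i j, c ≤ Q i j) :
    ∑ i, ∑ j, Q i j * ⟪y j - y i, y i⟫ ≤ -(c * N * ∑ i, ‖y i‖ ^ 2) := by
  set S := ∑ i, ∑ j, Q i j * ⟪y j - y i, y i⟫ with hS
  have hswap : S = ∑ i, ∑ j, Q i j * ⟪y i - y j, y j⟫ := by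
    rw [hS, Finset.sum_comm]
    exact Finset.sum_congr rfl fun i _ => Finset.sum_congr rfl fun j _ => by rw [hQs j i]
  have hpt : ∀ a b : EuclideanSpace ℝ (Fin d),
      ⟪b - a, a⟫ + ⟪a - b, b⟫ = -‖a - b‖ ^ 2 := by
    intro a b
    have h := real_inner_self_eq_norm_sq (a - b)
    have hcomm := real_inner_comm a b
    simp only [inner_sub_left, inner_sub_right] at h ⊢
    linarith
  have h2S : 2 * S = ∑ i, ∑ j, Q i j * (-‖y i - y j‖ ^ 2) := by
    have : 2 * S = S + S := by ring
    rw [this]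
    nth_rewrite 2 [hswap]
    rw [hS, ← Finset.sum_add_distrib]
    refine Finset.sum_congr rfl fun i _ => ?_
    rw [← Finset.sum_add_distrib]
    refine Finset.sum_congr rfl fun j _ => ?_
    rw [← mul_add, hpt]
  have hinner0 : ∑ i, ∑ j, ⟪y i, y j⟫ = 0 := by
    have h1 : ∑ i, ∑ j, ⟪y i, y j⟫ = ⟪∑ i, y i, ∑ j, y j⟫ := by
      rw [sum_inner]
      exact Finset.sum_congr rfl fun i _ => (inner_sum _ _ _).symm
    rw [h1, hy, inner_zero_left]
  have hsum : ∑ i, ∑ j, ‖y i - y j‖ ^ 2 = 2 * N * ∑ i, ‖y i‖ ^ 2 := by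
    have h1 : ∀ i j : Fin N, ‖y i - y j‖ ^ 2 = ‖y i‖ ^ 2 - 2 * ⟪y i, y j⟫ + ‖y j‖ ^ 2 :=
      fun i j => norm_sub_sq_real _ _
    simp_rw [h1]
    rw [Finset.sum_comm (f := fun i j => ‖y i‖ ^ 2 - 2 * ⟪y i, y j⟫ + ‖y j‖ ^ 2)]
    simp only [Finset.sum_add_distrib, Finset.sum_sub_distrib, Finset.sum_const,
      Finset.card_univ, Fintype.card_fin, nsmul_eq_mul, ← Finset.mul_sum]
    rw [Finset.sum_comm (f := fun j i => ⟪y i, y j⟫)] at *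
    rw [hinner0]
    ring
  have hmono : 2 * S ≤ -(c * (2 * N * ∑ i, ‖y i‖ ^ 2)) := by
    rw [h2S, ← hsum]
    calc ∑ i, ∑ j, Q i j * (-‖y i - y j‖ ^ 2)
        ≤ ∑ i, ∑ j, c * (-‖y i - y j‖ ^ 2) := by
          refine Finset.sum_le_sum fun i _ => Finset.sum_le_sum fun j _ => ?_
          exact mul_le_mul_of_nonpos_right (hQc i j) (neg_nonpos.mpr (sq_nonneg _))
      _ = -(c * ∑ i, ∑ j, ‖y i - y j‖ ^ 2) := by
          simp only [mul_neg, Finset.sum_neg_distrib, ← Finset.mul_sum]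
  linarith

open RealInnerProductSpace Finset in
/-- If the symmetric kernel P is bounded below by c > 0, the variance
W(t) = (1/N) Σᵢ ‖xᵢ(t) - x̄(t)‖² of the consensus dynamics decays at rate
d/dt W ≤ -2cW, hence W(t) ≤ W(0)e^{-2ct} for t ≥ 0: exponential consensus. -/
theorem consensus_exponential_decay {d N : ℕ} (hN : 0 < N)
    (c : ℝ) (hc : 0 < c)
    (x : Fin N → ℝ → EuclideanSpace ℝ (Fin d))
    (P : EuclideanSpace ℝ (Fin d) → EuclideanSpace ℝ (Fin d) → ℝ)
    (hPsymm : ∀ y z, P y z = P z y)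
    (hPc : ∀ y z, c ≤ P y z)
    (hdyn : ∀ i t, HasDerivAt (x i)
      ((1 / (N : ℝ)) • ∑ j, P (x i t) (x j t) • (x j t - x i t)) t) :
    (∀ t : ℝ, ∃ w' : ℝ,
        HasDerivAt (fun s => (1 / (N : ℝ)) *
            ∑ i, ‖x i s - (1 / (N : ℝ)) • ∑ k, x k s‖ ^ 2) w' t ∧
        w' ≤ -2 * c * ((1 / (N : ℝ)) *
            ∑ i, ‖x i t - (1 / (N : ℝ)) • ∑ k, x k t‖ ^ 2)) ∧
    ∀ t : ℝ, 0 ≤ t →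
      (1 / (N : ℝ)) * ∑ i, ‖x i t - (1 / (N : ℝ)) • ∑ k, x k t‖ ^ 2
        ≤ ((1 / (N : ℝ)) * ∑ i, ‖x i 0 - (1 / (N : ℝ)) • ∑ k, x k 0‖ ^ 2)
            * Real.exp (-2 * c * t) := by
  have hNR : (0 : ℝ) < N := by exact_mod_cast hN
  set v : Fin N → ℝ → EuclideanSpace ℝ (Fin d) :=
    fun i t => (1 / (N : ℝ)) • ∑ j, P (x i t) (x j t) • (x j t - x i t) with hvdef
  -- derivative of the mean
  have hmean : ∀ t, HasDerivAt (fun s => (1 / (N : ℝ)) • ∑ k, x k s)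
      ((1 / (N : ℝ)) • ∑ k, v k t) t := by
    intro t
    exact (HasDerivAt.fun_sum fun k _ => hdyn k t).const_smul (1 / (N : ℝ))
  -- derivative of each deviation
  have hyd : ∀ i t, HasDerivAt (fun s => x i s - (1 / (N : ℝ)) • ∑ k, x k s)
      (v i t - (1 / (N : ℝ)) • ∑ k, v k t) t := fun i t => (hdyn i t).sub (hmean t)
  -- derivative of each squared norm
  have hnorm : ∀ i t, HasDerivAt (fun s => ‖x i s - (1 / (N : ℝ)) • ∑ k, x k s‖ ^ 2)
      (2 * ⟪v i t - (1 / (N : ℝ)) • ∑ k, v k t,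
        x i t - (1 / (N : ℝ)) • ∑ k, x k t⟫) t := by
    intro i t
    have h := HasDerivAt.inner (𝕜 := ℝ) (hyd i t) (hyd i t)
    have heq : (fun s => ‖x i s - (1 / (N : ℝ)) • ∑ k, x k s‖ ^ 2)
        = fun s => ⟪x i s - (1 / (N : ℝ)) • ∑ k, x k s,
            x i s - (1 / (N : ℝ)) • ∑ k, x k s⟫ := by
      funext s; rw [real_inner_self_eq_norm_sq]
    rw [heq]
    refine h.congr_deriv ?_
    rw [real_inner_comm]; ring
  -- derivative of the variance functional
  have hW : ∀ t, HasDerivAt (fun s => (1 / (N : ℝ)) *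
      ∑ i, ‖x i s - (1 / (N : ℝ)) • ∑ k, x k s‖ ^ 2)
      ((1 / (N : ℝ)) * ∑ i, 2 * ⟪v i t - (1 / (N : ℝ)) • ∑ k, v k t,
        x i t - (1 / (N : ℝ)) • ∑ k, x k t⟫) t := by
    intro t
    exact (HasDerivAt.fun_sum fun i _ => hnorm i t).const_mul _
  -- the decay estimate on the derivative
  have hbound : ∀ t, (1 / (N : ℝ)) * ∑ i, 2 * ⟪v i t - (1 / (N : ℝ)) • ∑ k, v k t,
        x i t - (1 / (N : ℝ)) • ∑ k, x k t⟫
      ≤ -2 * c * ((1 / (N : ℝ)) *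
          ∑ i, ‖x i t - (1 / (N : ℝ)) • ∑ k, x k t‖ ^ 2) := by
    intro t
    set m := (1 / (N : ℝ)) • ∑ k, x k t with hm
    have hy0 : ∑ i, (x i t - m) = 0 := by
      rw [Finset.sum_sub_distrib, Finset.sum_const, Finset.card_univ, Fintype.card_fin, hm]
      rw [← Nat.cast_smul_eq_nsmul ℝ, smul_smul, mul_one_div, div_self hNR.ne', one_smul,
        sub_self]
    have h1 : ∑ i, ⟪v i t - (1 / (N : ℝ)) • ∑ k, v k t, x i t - m⟫
        = ∑ i, ⟪v i t, x i t - m⟫ := by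
      simp only [inner_sub_left]
      rw [Finset.sum_sub_distrib]
      have h := (inner_sum (𝕜 := ℝ) Finset.univ (fun i => x i t - m)
        ((1 / (N : ℝ)) • ∑ k, v k t)).symm
      rw [h, hy0, inner_zero_right, sub_zero]
    have h2 : ∀ i, ⟪v i t, x i t - m⟫
        = (1 / (N : ℝ)) * ∑ j, P (x i t) (x j t) *
            ⟪(x j t - m) - (x i t - m), x i t - m⟫ := by
      intro i
      rw [hvdef]
      rw [real_inner_smul_left, sum_inner]
      congr 1
      refine Finset.sum_congr rfl fun j _ => ?_
      rw [real_inner_smul_left, sub_sub_sub_cancel_right]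
    have h3 := key_sum_ineq c (fun i => x i t - m) hy0
      (fun i j => P (x i t) (x j t)) (fun i j => hPsymm _ _) (fun i j => hPc _ _)
    have h4 : (1 / (N : ℝ)) * ∑ i, 2 * ⟪v i t - (1 / (N : ℝ)) • ∑ k, v k t, x i t - m⟫
        = (2 / (N : ℝ) ^ 2) * ∑ i, ∑ j, P (x i t) (x j t) *
            ⟪(x j t - m) - (x i t - m), x i t - m⟫ := by
      rw [← Finset.mul_sum, h1]
      simp_rw [h2]
      rw [← Finset.mul_sum]
      ring
    rw [h4]
    have h5 : (2 / (N : ℝ) ^ 2) * ∑ i, ∑ j, P (x i t) (x j t) *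
          ⟪(x j t - m) - (x i t - m), x i t - m⟫
        ≤ (2 / (N : ℝ) ^ 2) * (-(c * N * ∑ i, ‖x i t - m‖ ^ 2)) :=
      mul_le_mul_of_nonneg_left h3 (by positivity)
    refine h5.trans_eq ?_
    field_simp
  refine ⟨fun t => ⟨_, hW t, hbound t⟩, ?_⟩
  -- Gronwall step
  set W : ℝ → ℝ := fun s => (1 / (N : ℝ)) *
    ∑ i, ‖x i s - (1 / (N : ℝ)) • ∑ k, x k s‖ ^ 2 with hWdef
  set D : ℝ → ℝ := fun t => (1 / (N : ℝ)) * ∑ i, 2 * ⟪v i t - (1 / (N : ℝ)) • ∑ k, v k t,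
    x i t - (1 / (N : ℝ)) • ∑ k, x k t⟫ with hDdef
  have hexp : ∀ s : ℝ, HasDerivAt (fun u => Real.exp (2 * c * u))
      (Real.exp (2 * c * s) * (2 * c)) s := by
    intro s
    simpa using ((hasDerivAt_id s).const_mul (2 * c)).exp
  have hg : ∀ s, HasDerivAt (fun u => W u * Real.exp (2 * c * u))
      (D s * Real.exp (2 * c * s) + W s * (Real.exp (2 * c * s) * (2 * c))) s :=
    fun s => (hW s).mul (hexp s)
  have hg' : ∀ s, deriv (fun u => W u * Real.exp (2 * c * u)) s ≤ 0 := by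
    intro s
    rw [(hg s).deriv]
    have hb : D s ≤ -2 * c * W s := hbound s
    have he := Real.exp_pos (2 * c * s)
    nlinarith [hb, he]
  have hanti : Antitone (fun u => W u * Real.exp (2 * c * u)) :=
    antitone_of_deriv_nonpos (fun s => (hg s).differentiableAt) hg'
  intro t ht
  have hle := hanti ht
  simp only [mul_zero, Real.exp_zero, mul_one] at hle
  have hE : Real.exp (-2 * c * t) * Real.exp (2 * c * t) = 1 := by
    rw [← Real.exp_add]
    norm_num
  show W t ≤ W 0 * Real.exp (-2 * c * t)
  have h7 := mul_le_mul_of_nonneg_right hle (Real.exp_pos (-2 * c * t)).le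
  rw [mul_assoc, mul_comm (Real.exp (2 * c * t)) _, hE, mul_one] at h7
  exact h7
end
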